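/- arXiv:1801.02314 — 2 statements merged into one kernel-verified Lean document; each statement's English description precedes it below -/
import Mathlib

section
/- Fortin's criterion (sufficiency): let V, M be Hilbert spaces, b : V × M → ℝ a bounded bilinear form satisfying the continuous inf-sup condition with constant β > 0, and let V_h ⊂ V, M_h ⊂ M be closed subspaces. If there exists a linear operator Π_h : V → V_h and a constant c > 0 with b(v - Π_h v, q_h) = 0 for all v ∈ V, q_h ∈ M_h, and ‖Π_h v‖_V ≤ c‖v‖_V for all v ∈ V, then the discrete inf-sup condition sup_{v_h ∈ V_h} b(v_h, q_h)/‖v_h‖_V ≥ (β/c) ‖q_h‖_M holds for all q_h ∈ M_h. -/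
open scoped NNReal

/-- Fortin's criterion, sufficiency: let `V, M` be real Hilbert
spaces, `b` a bounded bilinear form satisfying the continuous inf-sup
condition with constant `β > 0`, and `V_h ⊆ V`, `M_h ⊆ M` closed subspaces.
If there is a linear operator `Π_h : V → V_h` with `b(v - Π_h v, q_h) = 0` for
all `v, q_h` and `‖Π_h v‖ ≤ c ‖v‖`, then the discrete inf-sup condition holds
with constant `β / c`. -/
theorem fortin_criterion {V M : Type*}
    [NormedAddCommGroup V] [InnerProductSpace ℝ V] [CompleteSpace V]
    [NormedAddCommGroup M] [InnerProductSpace ℝ M] [CompleteSpace M]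
    (b : V →L[ℝ] M →L[ℝ] ℝ) (β : ℝ) (hβ : 0 < β)
    (hinfsup : ∀ q : M, β * ‖q‖ ≤ ⨆ v : V, b v q / ‖v‖)
    (Vh : Submodule ℝ V) (hVh : IsClosed (Vh : Set V))
    (Mh : Submodule ℝ M) (hMh : IsClosed (Mh : Set M))
    (Ph : V →ₗ[ℝ] V) (hPhVh : ∀ v : V, Ph v ∈ Vh)
    (c : ℝ) (hc : 0 < c)
    (hb0 : ∀ v : V, ∀ qh ∈ Mh, b (v - Ph v) qh = 0)
    (hbound : ∀ v : V, ‖Ph v‖ ≤ c * ‖v‖) :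
    ∀ qh ∈ Mh, (β / c) * ‖qh‖ ≤ ⨆ vh : Vh, b vh qh / ‖(vh : V)‖ := by
  intro qh hqh
  set S : ℝ := ⨆ vh : Vh, b vh qh / ‖(vh : V)‖ with hS
  have hbdd : BddAbove (Set.range fun vh : Vh => b vh qh / ‖(vh : V)‖) := by
    refine ⟨‖b‖ * ‖qh‖, ?_⟩
    rintro x ⟨vh, rfl⟩
    rcases eq_or_ne (vh : V) 0 with h0 | h0
    · simp [h0]
      positivity
    · have hn : 0 < ‖(vh : V)‖ := norm_pos_iff.mpr h0
      rw [div_le_iff₀ hn]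
      calc b vh qh ≤ ‖b (vh : V) qh‖ := le_abs_self _
        _ ≤ ‖b (vh : V)‖ * ‖qh‖ := (b (vh : V)).le_opNorm qh
        _ ≤ (‖b‖ * ‖(vh : V)‖) * ‖qh‖ := by
            gcongr; exact b.le_opNorm _
        _ = ‖b‖ * ‖qh‖ * ‖(vh : V)‖ := by ring
  have hS0 : 0 ≤ S := by
    have := le_ciSup hbdd (⟨0, Vh.zero_mem⟩ : Vh)
    simpa using this
  have key : ∀ v : V, b v qh / ‖v‖ ≤ c * S := by
    intro v
    have heq : b v qh = b (Ph v) qh := by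
      have := hb0 v qh hqh
      rw [map_sub] at this
      simpa using sub_eq_zero.mp this
    rcases le_or_gt (b v qh) 0 with hneg | hpos
    · have h1 : b v qh / ‖v‖ ≤ 0 := div_nonpos_of_nonpos_of_nonneg hneg (norm_nonneg v)
      exact h1.trans (by positivity)
    · have hPv : Ph v ≠ 0 := by
        intro h; rw [heq, h] at hpos; simp at hpos
      have hnP : 0 < ‖Ph v‖ := norm_pos_iff.mpr hPv
      have hle : b (Ph v) qh / ‖Ph v‖ ≤ S :=
        le_ciSup hbdd (⟨Ph v, hPhVh v⟩ : Vh)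
      have hv : 0 < ‖v‖ := by
        rcases eq_or_ne v 0 with rfl | h
        · simp at hpos
        · exact norm_pos_iff.mpr h
      have h2 : b v qh / ‖v‖ ≤ c * (b (Ph v) qh / ‖Ph v‖) := by
        rw [heq, div_le_iff₀ hv, mul_comm c, mul_assoc, div_mul_eq_mul_div,
          le_div_iff₀ hnP]
        rw [heq] at hpos
        nlinarith [hbound v]
      exact h2.trans (by nlinarith)
  have h3 : (⨆ v : V, b v qh / ‖v‖) ≤ c * S := ciSup_le key
  have h4 : β * ‖qh‖ ≤ c * S := (hinfsup qh).trans h3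
  rw [div_mul_eq_mul_div, div_le_iff₀ hc, mul_comm S c]
  linarith
end

section
/- Two-step construction of a Fortin operator: let V be a Banach space, V_h ⊂ V a subspace, b : V × M → ℝ bilinear, M_h ⊂ M. Suppose Π₁, Π₂ : V → V_h are linear with ‖Π₁v‖ ≤ c₁‖v‖, ‖Π₂(I - Π₁)v‖ ≤ c₂‖v‖, and b(v - Π₂v, q_h) = 0 for all v ∈ V, q_h ∈ M_h. Then Π_h v := Π₁v + Π₂(v - Π₁v) satisfies b(v - Π_h v, q_h) = 0 for all v ∈ V, q_h ∈ M_h, and ‖Π_h v‖ ≤ (c₁ + c₂)‖v‖. -/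
/-- two-step construction of a Fortin operator: let `V` be a
normed space, `V_h ⊆ V` a subspace, `b : V × M → ℝ` bilinear, `M_h ⊆ M`.
Suppose `Π₁, Π₂ : V → V_h` are linear with `‖Π₁ v‖ ≤ c₁ ‖v‖`,
`‖Π₂ (I - Π₁) v‖ ≤ c₂ ‖v‖`, and `b(v - Π₂ v, q_h) = 0` for all `v`, `q_h`.
Then `Π_h v := Π₁ v + Π₂ (v - Π₁ v)` maps into `V_h`, satisfies
`b(v - Π_h v, q_h) = 0`, and `‖Π_h v‖ ≤ (c₁ + c₂) ‖v‖`. -/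
theorem two_step_fortin {V M : Type*} [NormedAddCommGroup V] [NormedSpace ℝ V]
    [AddCommGroup M] [Module ℝ M]
    (b : V →ₗ[ℝ] M →ₗ[ℝ] ℝ)
    (Vh : Submodule ℝ V) (Mh : Submodule ℝ M)
    (P1 P2 : V →ₗ[ℝ] V)
    (hP1Vh : ∀ v : V, P1 v ∈ Vh) (hP2Vh : ∀ v : V, P2 v ∈ Vh)
    (c1 c2 : ℝ)
    (hc1 : ∀ v : V, ‖P1 v‖ ≤ c1 * ‖v‖)
    (hc2 : ∀ v : V, ‖P2 (v - P1 v)‖ ≤ c2 * ‖v‖)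
    (hb : ∀ v : V, ∀ qh ∈ Mh, b (v - P2 v) qh = 0) :
    ∀ v : V, (P1 v + P2 (v - P1 v)) ∈ Vh ∧
      (∀ qh ∈ Mh, b (v - (P1 v + P2 (v - P1 v))) qh = 0) ∧
      ‖P1 v + P2 (v - P1 v)‖ ≤ (c1 + c2) * ‖v‖ := by
  intro v
  refine ⟨Vh.add_mem (hP1Vh v) (hP2Vh _), fun qh hqh => ?_, ?_⟩
  · -- `v - Π_h v = (I - Π₂) (I - Π₁) v`, so the orthogonality of `Π₂` applies to `v - Π₁ v`.
    rw [sub_add_eq_sub_sub]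
    exact hb (v - P1 v) qh hqh
  · rw [add_mul]
    exact norm_add_le_of_le (hc1 v) (hc2 v)
end
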